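/- arXiv:1710.01044 — 7 statements merged into one kernel-verified Lean document; each statement's English description precedes it below -/
import Mathlib

section
/- Every bounded independent sequence of real-valued functions on a set X is an l1-sequence: there exists a constant a > 0 such that for all n and all real scalars c_1,...,c_n, a·∑|c_i| ≤ ‖∑ c_i f_i‖_∞. -/
/-!
If `f` is independent with gap `a < b`, then for any coefficients `c` independence gives a point
`x₁` where `f i` is above `b` whenever `c i ≥ 0` and below `a` whenever `c i < 0`, and a point
`x₂` with the opposite pattern. Each term of `∑ c i f i x₁ - ∑ c i f i x₂` is then at least
`(b - a) |c i|`, while the difference is at most twice the sup-norm, so `(b - a) / 2` works.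
-/

/-- A sequence of real-valued functions on a set `X` is *independent* if there exist
reals `a < b` such that for all finite disjoint `P, M ⊆ ℕ` the corresponding
intersection of preimages is nonempty. -/
def IndepSeq {X : Type*} (f : ℕ → X → ℝ) : Prop :=
  ∃ a b : ℝ, a < b ∧ ∀ P M : Finset ℕ, Disjoint P M →
    ∃ x : X, (∀ n ∈ P, f n x < a) ∧ (∀ n ∈ M, b < f n x)

section

variable {ι X : Type*} {f : ι → X → ℝ}

theorem bddAbove_range_abs_sum_mul {C : ℝ} (hC : ∀ i x, |f i x| ≤ C) (s : Finset ι)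
    (c : ι → ℝ) : BddAbove (Set.range fun x => |∑ i ∈ s, c i * f i x|) := by
  refine ⟨∑ i ∈ s, |c i| * C, ?_⟩
  rintro _ ⟨x, rfl⟩
  calc |∑ i ∈ s, c i * f i x| ≤ ∑ i ∈ s, |c i * f i x| := Finset.abs_sum_le_sum_abs _ _
    _ ≤ ∑ i ∈ s, |c i| * C := Finset.sum_le_sum fun i _ => by
        rw [abs_mul]
        exact mul_le_mul_of_nonneg_left (hC i x) (abs_nonneg _)

theorem sub_le_two_mul_ciSup_abs {g : X → ℝ} (hg : BddAbove (Set.range fun x => |g x|))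
    (x y : X) : g x - g y ≤ 2 * ⨆ z, |g z| := by
  have hx : |g x| ≤ ⨆ z, |g z| := le_ciSup hg x
  have hy : |g y| ≤ ⨆ z, |g z| := le_ciSup hg y
  linarith [le_abs_self (g x), neg_abs_le (g y)]

theorem exists_pattern_of_disjoint {a b : ℝ}
    (h : ∀ P M : Finset ι, Disjoint P M → ∃ x, (∀ i ∈ P, f i x < a) ∧ ∀ i ∈ M, b < f i x)
    (s : Finset ι) (p : ι → Prop) [DecidablePred p] :
    ∃ x, ∀ i ∈ s, (p i → b < f i x) ∧ (¬p i → f i x < a) := by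
  obtain ⟨x, hlow, hhigh⟩ :=
    h (s.filter fun i => ¬p i) (s.filter p) (Finset.disjoint_filter_filter_not _ _ _).symm
  exact ⟨x, fun i hi => ⟨fun hp => hhigh i (Finset.mem_filter.2 ⟨hi, hp⟩),
    fun hp => hlow i (Finset.mem_filter.2 ⟨hi, hp⟩)⟩⟩

theorem sub_mul_abs_le_mul_sub {a b c u v : ℝ} (hpos : 0 ≤ c → b < u ∧ v < a)
    (hneg : c < 0 → u < a ∧ b < v) : (b - a) * |c| ≤ c * u - c * v := by
  rcases le_or_gt 0 c with hc | hc
  · obtain ⟨hu, hv⟩ := hpos hc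
    rw [abs_of_nonneg hc]
    nlinarith
  · obtain ⟨hu, hv⟩ := hneg hc
    rw [abs_of_neg hc]
    nlinarith

theorem exists_sub_mul_sum_abs_le {a b : ℝ}
    (h : ∀ P M : Finset ι, Disjoint P M → ∃ x, (∀ i ∈ P, f i x < a) ∧ ∀ i ∈ M, b < f i x)
    (s : Finset ι) (c : ι → ℝ) : ∃ x₁ x₂, (b - a) * ∑ i ∈ s, |c i| ≤
      ∑ i ∈ s, c i * f i x₁ - ∑ i ∈ s, c i * f i x₂ := by
  obtain ⟨x₁, hx₁⟩ := exists_pattern_of_disjoint h s fun i => 0 ≤ c i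
  obtain ⟨x₂, hx₂⟩ := exists_pattern_of_disjoint h s fun i => c i < 0
  refine ⟨x₁, x₂, ?_⟩
  rw [← Finset.sum_sub_distrib, Finset.mul_sum]
  refine Finset.sum_le_sum fun i hi => sub_mul_abs_le_mul_sub ?_ ?_
  · exact fun hc => ⟨(hx₁ i hi).1 hc, (hx₂ i hi).2 hc.not_gt⟩
  · exact fun hc => ⟨(hx₁ i hi).2 hc.not_ge, (hx₂ i hi).1 hc⟩

end

/-- Every bounded independent sequence of real-valued functions is an `l₁`-sequence. -/
theorem bounded_independent_is_l1_sequence {X : Type*} (f : ℕ → X → ℝ)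
    (hb : ∃ C : ℝ, ∀ n x, |f n x| ≤ C) (hind : IndepSeq f) :
    ∃ a : ℝ, 0 < a ∧ ∀ (n : ℕ) (c : ℕ → ℝ),
      a * ∑ i ∈ Finset.range n, |c i| ≤ ⨆ x : X, |∑ i ∈ Finset.range n, c i * f i x| := by
  obtain ⟨C, hC⟩ := hb
  obtain ⟨a, b, hab, hPM⟩ := hind
  refine ⟨(b - a) / 2, by linarith, fun n c => ?_⟩
  obtain ⟨x₁, x₂, hgap⟩ := exists_sub_mul_sum_abs_le hPM (Finset.range n) c
  have hsup := sub_le_two_mul_ciSup_abs (bddAbove_range_abs_sum_mul hC (Finset.range n) c) x₁ x₂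
  linarith
end

section
/- Let {f_n} be a bounded sequence of continuous real-valued functions on a topological space X, and let Y be a dense subset of X. Then {f_n} is an independent sequence on X if and only if the sequence of restrictions {f_n|_Y} is an independent sequence on Y. -/
theorem isOpen_setOf_forall_lt_and_forall_gt {X : Type*} [TopologicalSpace X]
    {f : ℕ → X → ℝ} (hc : ∀ n, Continuous (f n)) (P M : Finset ℕ) (a b : ℝ) :
    IsOpen {x | (∀ n ∈ P, f n x < a) ∧ ∀ n ∈ M, b < f n x} := by
  simp only [Set.ofPred_and, Set.ofPred_forall]
  exact (isOpen_biInter_finset fun n _ => isOpen_lt (hc n) continuous_const).inter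
    (isOpen_biInter_finset fun n _ => isOpen_lt continuous_const (hc n))

theorem IndepSeq.of_comp {X Z : Type*} {f : ℕ → X → ℝ} (g : Z → X)
    (h : IndepSeq fun n z => f n (g z)) : IndepSeq f := by
  obtain ⟨a, b, hab, h⟩ := h
  refine ⟨a, b, hab, fun P M hPM => ?_⟩
  obtain ⟨z, hz⟩ := h P M hPM
  exact ⟨g z, hz⟩

/-- Each cell of an independent sequence of continuous functions is a nonempty open set,
so it meets any dense range. -/
theorem IndepSeq.comp_of_denseRange {X Z : Type*} [TopologicalSpace X] {f : ℕ → X → ℝ}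
    (hc : ∀ n, Continuous (f n)) {g : Z → X} (hg : DenseRange g) (h : IndepSeq f) :
    IndepSeq fun n z => f n (g z) := by
  obtain ⟨a, b, hab, h⟩ := h
  exact ⟨a, b, hab, fun P M hPM =>
    hg.exists_mem_open (isOpen_setOf_forall_lt_and_forall_gt hc P M a b) (h P M hPM)⟩

theorem indep_iff_indep_restrict_dense_general {X : Type*} [TopologicalSpace X]
    (f : ℕ → X → ℝ) (hc : ∀ n, Continuous (f n))
    (Y : Set X) (hY : Dense Y) :
    IndepSeq f ↔ IndepSeq (fun n (y : Y) => f n y) :=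
  ⟨IndepSeq.comp_of_denseRange hc hY.denseRange_val, IndepSeq.of_comp Subtype.val⟩

/-- For a bounded sequence of continuous functions on `X` and a dense subset `Y ⊆ X`,
`{fₙ}` is independent on `X` iff the restrictions `{fₙ|_Y}` are independent on `Y`. -/
theorem indep_iff_indep_restrict_dense {X : Type*} [TopologicalSpace X]
    (f : ℕ → X → ℝ) (hc : ∀ n, Continuous (f n)) (hb : ∃ C : ℝ, ∀ n x, |f n x| ≤ C)
    (Y : Set X) (hY : Dense Y) :
    IndepSeq f ↔ IndepSeq (fun n (y : Y) => f n y) :=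
  indep_iff_indep_restrict_dense_general f hc Y hY
end

section
/- Let α : X → X' be a continuous surjection between compact Hausdorff spaces, (Y, μ) a uniform space, and f : X → Y, f' : X' → Y maps with f' ∘ α = f. Then f is fragmented if and only if f' is fragmented. -/
/-!
Pulling back along `α` preserves fragmentability since preimages of open sets are open. For the
converse, given `A' ⊆ X'` let `C` be its closure and, by Zorn's lemma and compactness, let `B ⊆ X`
be a minimal closed set with `α '' B = C`. Fragmentability of `f` on `B` gives an open `O` meeting
`B` on which `f` is `ε`-small. By minimality `α '' (B \ O)` is a proper closed subset of `C`, so its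
complement `O'` is an open set meeting `C`, hence `A'`, and every point of `O' ∩ C` is the image
of a point of `O ∩ B`; thus `f'` is `ε`-small on `O' ∩ A'`.
-/

/-- A map `f : X → Y` from a topological space to a uniform space is *fragmented*
if for every nonempty `A ⊆ X` and every entourage `ε` there is an open `O` with
`O ∩ A ≠ ∅` and `f (O ∩ A)` ε-small. -/
def Fragmented {X Y : Type*} [TopologicalSpace X] [UniformSpace Y] (f : X → Y) : Prop :=
  ∀ A : Set X, A.Nonempty → ∀ ε ∈ uniformity Y, ∃ O : Set X, IsOpen O ∧ (O ∩ A).Nonempty ∧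
    ∀ x ∈ O ∩ A, ∀ y ∈ O ∩ A, (f x, f y) ∈ ε

open Set

section

variable {X X' Y : Type*} [TopologicalSpace X] [TopologicalSpace X'] [UniformSpace Y]
  {α : X → X'}

theorem Fragmented.comp_continuous {f' : X' → Y} (hf' : Fragmented f') (hα : Continuous α) :
    Fragmented (f' ∘ α) := by
  intro A hA ε hε
  obtain ⟨O', hO', ⟨_, hxO', x, hxA, rfl⟩, hsmall⟩ := hf' (α '' A) (hA.image α) ε hε
  refine ⟨α ⁻¹' O', hO'.preimage hα, ⟨x, hxO', hxA⟩, ?_⟩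
  rintro x ⟨hxO', hxA⟩ y ⟨hyO', hyA⟩
  exact hsmall _ ⟨hxO', mem_image_of_mem α hxA⟩ _ ⟨hyO', mem_image_of_mem α hyA⟩

theorem image_sInter_eq_of_isChain [CompactSpace X] [T1Space X'] (hα : Continuous α)
    {c : Set (Set X)} (hc : IsChain (· ⊆ ·) c) (hcne : c.Nonempty)
    (hcl : ∀ B ∈ c, IsClosed B) {C : Set X'} (him : ∀ B ∈ c, α '' B = C) :
    α '' ⋂₀ c = C := by
  obtain ⟨B₀, hB₀⟩ := hcne
  refine (image_mono (sInter_subset_of_mem hB₀)).trans (him B₀ hB₀).subset |>.antisymm ?_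
  intro a ha
  have : Nonempty c := ⟨⟨B₀, hB₀⟩⟩
  let fiber : c → Set X := fun B => B ∩ α ⁻¹' {a}
  have hclosed (B : c) : IsClosed (fiber B) :=
    (hcl B B.2).inter (isClosed_singleton.preimage hα)
  have hdir : Directed (· ⊇ ·) fiber := by
    intro B₁ B₂
    rcases hc.total B₁.2 B₂.2 with h | h
    · exact ⟨B₁, subset_rfl, inter_subset_inter_left _ h⟩
    · exact ⟨B₂, inter_subset_inter_left _ h, subset_rfl⟩
  have hne (B : c) : (fiber B).Nonempty := by
    obtain ⟨x, hx, rfl⟩ := (him B B.2).symm ▸ ha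
    exact ⟨x, hx, rfl⟩
  obtain ⟨x, hx⟩ := IsCompact.nonempty_iInter_of_directed_nonempty_isCompact_isClosed fiber hdir
    hne (fun B => (hclosed B).isCompact) hclosed
  rw [mem_iInter] at hx
  exact ⟨x, fun B hB => (hx ⟨B, hB⟩).1, (hx ⟨B₀, hB₀⟩).2⟩

theorem exists_minimal_isClosed_image_eq [CompactSpace X] [T1Space X'] (hα : Continuous α)
    {B₀ : Set X} (hB₀ : IsClosed B₀) :
    ∃ B ⊆ B₀, Minimal (fun B => IsClosed B ∧ α '' B = α '' B₀) B :=
  zorn_superset_nonempty {B | IsClosed B ∧ α '' B = α '' B₀}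
    (fun c hcS hc hcne => ⟨⋂₀ c,
      ⟨isClosed_sInter fun _ hB => (hcS hB).1,
        image_sInter_eq_of_isChain hα hc hcne (fun _ hB => (hcS hB).1) fun _ hB => (hcS hB).2⟩,
      fun _ => sInter_subset_of_mem⟩) B₀ ⟨hB₀, rfl⟩

theorem exists_isOpen_inter_subset_image_of_minimal (hαc : IsClosedMap α) {B : Set X}
    {C : Set X'} (hB : Minimal (fun B => IsClosed B ∧ α '' B = C) B) {O : Set X}
    (hO : IsOpen O) (hOB : (O ∩ B).Nonempty) :
    ∃ O' : Set X', IsOpen O' ∧ (C ∩ O').Nonempty ∧ C ∩ O' ⊆ α '' (O ∩ B) := by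
  obtain ⟨⟨hBcl, rfl⟩, hBmin⟩ := hB
  have hproper : ¬ α '' B ⊆ α '' (B \ O) := by
    intro hsub
    obtain ⟨x, hxO, hxB⟩ := hOB
    exact (hBmin ⟨hBcl.sdiff hO, (image_mono sdiff_subset).antisymm hsub⟩ sdiff_subset hxB).2 hxO
  refine ⟨(α '' (B \ O))ᶜ, (hαc _ (hBcl.sdiff hO)).isOpen_compl, not_subset.mp hproper, ?_⟩
  rintro _ ⟨⟨x, hxB, rfl⟩, hx⟩
  exact ⟨x, ⟨by_contra fun hxO => hx ⟨x, ⟨hxB, hxO⟩, rfl⟩, hxB⟩, rfl⟩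

theorem Fragmented.of_comp [CompactSpace X] [T1Space X'] {f' : X' → Y} (hα : Continuous α)
    (hαc : IsClosedMap α) (hαs : Function.Surjective α) (hf : Fragmented (f' ∘ α)) :
    Fragmented f' := by
  intro A' hA' ε hε
  have hC : IsClosed (α ⁻¹' closure A') := isClosed_closure.preimage hα
  obtain ⟨B, -, hB⟩ := exists_minimal_isClosed_image_eq hα hC
  rw [image_preimage_eq _ hαs] at hB
  have hBne : B.Nonempty := (hB.prop.2 ▸ hA'.closure).of_image
  obtain ⟨O, hO, hOB, hsmall⟩ := hf B hBne ε hε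
  obtain ⟨O', hO', hO'C, hO'sub⟩ := exists_isOpen_inter_subset_image_of_minimal hαc hB hO hOB
  have hlift : O' ∩ A' ⊆ α '' (O ∩ B) := fun a ha => hO'sub ⟨subset_closure ha.2, ha.1⟩
  refine ⟨O', hO', inter_comm A' O' ▸ (closure_inter_open_nonempty_iff hO').mp hO'C, ?_⟩
  intro _ ha _ hb
  obtain ⟨x, hx, rfl⟩ := hlift ha
  obtain ⟨y, hy, rfl⟩ := hlift hb
  exact hsmall x hx y hy

end

theorem fragmented_iff_of_quotient_general {X X' Y : Type*} [TopologicalSpace X] [CompactSpace X]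
    [TopologicalSpace X'] [T2Space X'] [UniformSpace Y]
    (α : X → X') (hα : Continuous α) (hαs : Function.Surjective α)
    (f : X → Y) (f' : X' → Y) (h : f' ∘ α = f) :
    Fragmented f ↔ Fragmented f' := by
  subst h
  exact ⟨fun hf => hf.of_comp hα hα.isClosedMap hαs, fun hf' => hf'.comp_continuous hα⟩

/-- For a continuous surjection `α : X → X'` of compact Hausdorff spaces and maps
`f : X → Y`, `f' : X' → Y` with `f' ∘ α = f`, `f` is fragmented iff `f'` is fragmented. -/
theorem fragmented_iff_of_quotient {X X' Y : Type*} [TopologicalSpace X] [CompactSpace X]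
    [T2Space X] [TopologicalSpace X'] [CompactSpace X'] [T2Space X'] [UniformSpace Y]
    (α : X → X') (hα : Continuous α) (hαs : Function.Surjective α)
    (f : X → Y) (f' : X' → Y) (h : f' ∘ α = f) :
    Fragmented f ↔ Fragmented f' :=
  fragmented_iff_of_quotient_general α hα hαs f f' h
end

section
/- If X is a hereditarily Baire topological space (e.g., compact Hausdorff or Polish) and (Y,d) is a pseudometric space, then a map f : X → Y is fragmented if and only if f has the point of continuity property. -/
/-!
For fragmented `f` and a closed `A`, the points having a neighbourhood on whose trace on `A` the
map `f` varies by less than `1 / (n + 1)` form a dense open subset of `A`; if `A` is Baire these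
sets have a common point, and at it `f|_A` is continuous. Conversely, a point of continuity of
`f|_{closure A}` has a neighbourhood `O` meeting `A` on which `f|_A` varies by less than `ε`.
-/

/-- A map `f : X → Y` to a pseudometric space is *fragmented* if for every nonempty
`A ⊆ X` and every `ε > 0` there is an open `O` with `O ∩ A ≠ ∅` and `f (O ∩ A)` of
diameter less than `ε`. -/
def FragmentedMetric {X Y : Type*} [TopologicalSpace X] [PseudoMetricSpace Y]
    (f : X → Y) : Prop :=
  ∀ A : Set X, A.Nonempty → ∀ ε : ℝ, 0 < ε → ∃ O : Set X, IsOpen O ∧ (O ∩ A).Nonempty ∧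
    ∀ x ∈ O ∩ A, ∀ y ∈ O ∩ A, dist (f x) (f y) < ε

open Set Metric

section

variable {X Y : Type*} [TopologicalSpace X] [PseudoMetricSpace Y]

def smallOscillationSet (f : X → Y) (A : Set X) (δ : ℝ) : Set X :=
  {x | ∃ O : Set X, IsOpen O ∧ x ∈ O ∧ ∀ y ∈ O ∩ A, ∀ z ∈ O ∩ A, dist (f y) (f z) < δ}

theorem isOpen_smallOscillationSet (f : X → Y) (A : Set X) (δ : ℝ) :
    IsOpen (smallOscillationSet f A δ) := by
  rw [isOpen_iff_forall_mem_open]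
  rintro x ⟨O, hO, hxO, hsmall⟩
  exact ⟨O, fun y hy => ⟨O, hO, hy, hsmall⟩, hO, hxO⟩

theorem FragmentedMetric.dense_smallOscillationSet {f : X → Y} (hf : FragmentedMetric f)
    (A : Set X) {δ : ℝ} (hδ : 0 < δ) :
    Dense ((↑) ⁻¹' smallOscillationSet f A δ : Set A) := by
  rw [dense_iff_inter_open]
  rintro U hU ⟨u, huU⟩
  obtain ⟨V, hV, rfl⟩ := isOpen_induced_iff.mp hU
  obtain ⟨O, hO, ⟨w, hwO, hwV, hwA⟩, hsmall⟩ := hf (V ∩ A) ⟨u, huU, u.2⟩ δ hδ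
  refine ⟨⟨w, hwA⟩, hwV, O ∩ V, hO.inter hV, ⟨hwO, hwV⟩, ?_⟩
  rintro y ⟨⟨hyO, hyV⟩, hyA⟩ z ⟨⟨hzO, hzV⟩, hzA⟩
  exact hsmall y ⟨hyO, hyV, hyA⟩ z ⟨hzO, hzV, hzA⟩

theorem continuousWithinAt_of_forall_mem_smallOscillationSet {f : X → Y} {A : Set X} {x : X}
    (hxA : x ∈ A) (hx : ∀ n : ℕ, x ∈ smallOscillationSet f A (1 / (n + 1))) :
    ContinuousWithinAt f A x := by
  rw [continuousWithinAt_iff']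
  intro ε hε
  obtain ⟨n, hn⟩ := exists_nat_one_div_lt hε
  obtain ⟨O, hO, hxO, hsmall⟩ := hx n
  filter_upwards [nhdsWithin_le_nhds (hO.mem_nhds hxO), self_mem_nhdsWithin] with y hyO hyA
  exact (hsmall y ⟨hyO, hyA⟩ x ⟨hxO, hxA⟩).trans hn

theorem FragmentedMetric.exists_continuousWithinAt {f : X → Y} (hf : FragmentedMetric f)
    {A : Set X} [BaireSpace A] (hA : A.Nonempty) : ∃ x ∈ A, ContinuousWithinAt f A x := by
  have : Nonempty A := hA.to_subtype
  have hdense := dense_iInter_of_isOpen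
    (fun n : ℕ => (isOpen_smallOscillationSet f A _).preimage continuous_subtype_val)
    (fun n : ℕ => hf.dense_smallOscillationSet A (Nat.one_div_pos_of_nat (n := n)))
  obtain ⟨x, hx⟩ := hdense.nonempty
  exact ⟨x, x.2,
    continuousWithinAt_of_forall_mem_smallOscillationSet x.2 fun n => mem_iInter.mp hx n⟩

theorem exists_isOpen_dist_lt_of_continuousWithinAt {f : X → Y} {A : Set X} {x : X}
    (hxA : x ∈ closure A) (hf : ContinuousWithinAt f A x) {ε : ℝ} (hε : 0 < ε) :
    ∃ O : Set X, IsOpen O ∧ (O ∩ A).Nonempty ∧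
      ∀ y ∈ O ∩ A, ∀ z ∈ O ∩ A, dist (f y) (f z) < ε := by
  obtain ⟨O, hO, hxO, hball⟩ := mem_nhdsWithin.mp (hf (ball_mem_nhds (f x) (half_pos hε)))
  refine ⟨O, hO, mem_closure_iff.mp hxA O hO hxO, fun y hy z hz => ?_⟩
  have hy : dist (f y) (f x) < ε / 2 := hball hy
  have hz : dist (f z) (f x) < ε / 2 := hball hz
  calc dist (f y) (f z) ≤ dist (f y) (f x) + dist (f z) (f x) := dist_triangle_right _ _ _
    _ < ε := by linarith

end

/-- On a hereditarily Baire space, a map into a pseudometric space is fragmented iff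
it has the point of continuity property. -/
theorem fragmented_iff_pcp_of_hereditarilyBaire {X Y : Type*} [TopologicalSpace X]
    [PseudoMetricSpace Y]
    (hhb : ∀ A : Set X, IsClosed A → A.Nonempty → BaireSpace A)
    (f : X → Y) :
    FragmentedMetric f ↔
      ∀ A : Set X, IsClosed A → A.Nonempty → ∃ x ∈ A, ContinuousWithinAt f A x := by
  refine ⟨fun hf A hA hne => ?_, fun hpcp A hne ε hε => ?_⟩
  · have := hhb A hA hne
    exact hf.exists_continuousWithinAt hne
  · obtain ⟨x, hx, hfx⟩ := hpcp (closure A) isClosed_closure hne.closure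
    exact exists_isOpen_dist_lt_of_continuousWithinAt hx (hfx.mono subset_closure) hε
end

section
/- If X is a Polish space and Y a separable metric space, then f : X → Y is fragmented if and only if f is of Baire class 1 (the preimage of every open set is an F_σ set). -/
/-!
Fragmented ⇒ Baire one: for each `ε > 0`, the union `W` of all open sets that are covered by
countably many locally closed sets on which `f` varies by less than `ε` is itself so covered,
by Lindelöf. Fragmentability applied to `Wᶜ` yields an open `O` meeting `Wᶜ` with `O ∩ Wᶜ` such a
piece, so `O ⊆ W`, hence `W = univ`. Then `f ⁻¹' U` is the union, over `ε = 1/(n+1)`, of the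
pieces it contains, a countable union of locally closed, hence `F_σ`, sets.

Baire one ⇒ fragmented: covering `Y` by countably many balls of radius `ε/2`, the space is a
countable union of closed sets on which `f` varies by less than `ε`. By the Baire category
theorem in the Polish space `closure A`, one of them contains a nonempty relatively open part
`O ∩ closure A`, and `O` meets `A` because `A` is dense in its closure.
-/

open Set TopologicalSpace

section CountablyCoveredBy

variable {X : Type*}

def CountablyCoveredBy (P : Set X → Prop) (s : Set X) : Prop :=
  ∃ S : Set (Set X), S.Countable ∧ (∀ p ∈ S, P p) ∧ s ⊆ ⋃₀ S

theorem CountablyCoveredBy.mono {P : Set X → Prop} {s t : Set X} (ht : CountablyCoveredBy P t)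
    (hst : s ⊆ t) : CountablyCoveredBy P s :=
  let ⟨S, hSc, hSP, hS⟩ := ht
  ⟨S, hSc, hSP, hst.trans hS⟩

theorem countablyCoveredBy_self {P : Set X → Prop} {p : Set X} (hp : P p) :
    CountablyCoveredBy P p :=
  ⟨{p}, countable_singleton p, forall_eq.2 hp, (sUnion_singleton p).superset⟩

theorem CountablyCoveredBy.union {P : Set X → Prop} {s t : Set X} (hs : CountablyCoveredBy P s)
    (ht : CountablyCoveredBy P t) : CountablyCoveredBy P (s ∪ t) := by
  obtain ⟨S, hSc, hSP, hS⟩ := hs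
  obtain ⟨T, hTc, hTP, hT⟩ := ht
  refine ⟨S ∪ T, hSc.union hTc, fun p hp => hp.elim (hSP p) (hTP p), ?_⟩
  rw [sUnion_union]
  exact union_subset_union hS hT

theorem countablyCoveredBy_sUnion_isOpen [TopologicalSpace X] [SecondCountableTopology X]
    (P : Set X → Prop) :
    CountablyCoveredBy P (⋃₀ {G | IsOpen G ∧ CountablyCoveredBy P G}) := by
  obtain ⟨T, hTc, hTsub, hT⟩ :=
    isOpen_sUnion_countable {G | IsOpen G ∧ CountablyCoveredBy P G} fun G hG => hG.1
  choose! C hCc hCP hC using fun G (hG : G ∈ T) => (hTsub hG).2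
  refine ⟨⋃ G ∈ T, C G, hTc.biUnion hCc, ?_, ?_⟩
  · simp only [mem_iUnion]
    rintro p ⟨G, hG, hp⟩
    exact hCP G hG p hp
  · rw [← hT]
    rintro x ⟨G, hG, hx⟩
    obtain ⟨p, hp, hxp⟩ := hC G hG hx
    exact ⟨p, mem_biUnion hG hp, hxp⟩

end CountablyCoveredBy

section

variable {X : Type*} [TopologicalSpace X]

theorem isGδ_compl_iff_eq_iUnion_nat {s : Set X} :
    IsGδ sᶜ ↔ ∃ g : ℕ → Set X, (∀ n, IsClosed (g n)) ∧ s = ⋃ n, g n := by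
  rw [isGδ_iff_eq_iInter_nat]
  constructor
  · rintro ⟨u, hu, hs⟩
    refine ⟨fun n => (u n)ᶜ, fun n => (hu n).isClosed_compl, ?_⟩
    rw [← compl_iInter, ← hs, compl_compl]
  · rintro ⟨g, hg, rfl⟩
    exact ⟨fun n => (g n)ᶜ, fun n => (hg n).isOpen_compl, compl_iUnion g⟩

theorem IsLocallyClosed.isGδ_compl [PerfectlyNormalSpace X] {s : Set X}
    (hs : IsLocallyClosed s) : IsGδ sᶜ := by
  obtain ⟨U, Z, hU, hZ, rfl⟩ := hs
  rw [compl_inter]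
  exact hU.isClosed_compl.isGδ.union hZ.isOpen_compl.isGδ

theorem isGδ_compl_sUnion_of_isLocallyClosed [PerfectlyNormalSpace X] {S : Set (Set X)}
    (hS : S.Countable) (h : ∀ s ∈ S, IsLocallyClosed s) : IsGδ (⋃₀ S)ᶜ := by
  rw [compl_sUnion]
  exact IsGδ.sInter (forall_mem_image.2 fun s hs => (h s hs).isGδ_compl) (hS.image _)

theorem exists_mem_isOpen_inter_subset_of_subset_sUnion {F : Set X} [BaireSpace F]
    (hF : F.Nonempty) {S : Set (Set X)} (hS : S.Countable) (hSc : ∀ p ∈ S, IsClosed p)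
    (hFS : F ⊆ ⋃₀ S) : ∃ p ∈ S, ∃ O, IsOpen O ∧ (O ∩ F).Nonempty ∧ O ∩ F ⊆ p := by
  have := hS.to_subtype
  have := hF.to_subtype
  obtain ⟨p, z, hz⟩ := nonempty_interior_of_iUnion_of_closed
    (f := fun p : S => ((↑) : F → X) ⁻¹' p) (fun p => (hSc p p.2).preimage continuous_subtype_val)
    (eq_univ_of_forall fun z => by simpa using hFS z.2)
  obtain ⟨O, hO, hOeq⟩ := isOpen_induced_iff.1 (isOpen_interior (s := ((↑) : F → X) ⁻¹' p))
  refine ⟨p, p.2, O, hO, ⟨z, ?_, z.2⟩, fun x hx => ?_⟩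
  · rw [← mem_preimage, hOeq]
    exact hz
  · have : (⟨x, hx.2⟩ : F) ∈ interior (((↑) : F → X) ⁻¹' p) := by
      rw [← hOeq]
      exact hx.1
    exact interior_subset (s := ((↑) : F → X) ⁻¹' p) this

end

namespace FragmentedMetric

variable {X Y : Type*} [TopologicalSpace X] [PseudoMetricSpace Y] {f : X → Y}

theorem countablyCoveredBy_univ [SecondCountableTopology X] (hf : FragmentedMetric f) {ε : ℝ}
    (hε : 0 < ε) : CountablyCoveredBy
      (fun p => IsLocallyClosed p ∧ ∀ x ∈ p, ∀ y ∈ p, dist (f x) (f y) < ε) univ := by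
  set P : Set X → Prop := fun p => IsLocallyClosed p ∧ ∀ x ∈ p, ∀ y ∈ p, dist (f x) (f y) < ε
  set W := ⋃₀ {G | IsOpen G ∧ CountablyCoveredBy P G}
  have hW : IsOpen W := isOpen_sUnion fun G hG => hG.1
  suffices W = univ by rw [← this]; exact countablyCoveredBy_sUnion_isOpen P
  by_contra hne
  obtain ⟨O, hO, ⟨x, hxO, hxW⟩, hOsmall⟩ := hf Wᶜ (nonempty_compl.2 hne) ε hε
  have hOcov : CountablyCoveredBy P O :=
    ((countablyCoveredBy_self ⟨⟨O, Wᶜ, hO, hW.isClosed_compl, rfl⟩, hOsmall⟩).union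
      (countablyCoveredBy_sUnion_isOpen P)).mono fun y hy => by
        by_cases hyW : y ∈ W
        exacts [Or.inr hyW, Or.inl ⟨hy, hyW⟩]
  have hOmem : O ∈ {G | IsOpen G ∧ CountablyCoveredBy P G} := ⟨hO, hOcov⟩
  exact hxW (subset_sUnion_of_mem hOmem hxO)

theorem isGδ_compl_preimage [SecondCountableTopology X] [PerfectlyNormalSpace X]
    (hf : FragmentedMetric f) {U : Set Y} (hU : IsOpen U) : IsGδ (f ⁻¹' U)ᶜ := by
  choose S hSc hSP hS using fun n : ℕ =>
    hf.countablyCoveredBy_univ (Nat.one_div_pos_of_nat (n := n))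
  have hU_eq : f ⁻¹' U = ⋃₀ ⋃ n, {p ∈ S n | p ⊆ f ⁻¹' U} := by
    refine Subset.antisymm (fun x hx => ?_) (sUnion_subset fun p hp => ?_)
    · obtain ⟨r, hr, hball⟩ := Metric.isOpen_iff.1 hU (f x) hx
      obtain ⟨n, hn⟩ := exists_nat_one_div_lt hr
      obtain ⟨p, hpS, hxp⟩ := hS n (mem_univ x)
      exact ⟨p, mem_iUnion.2 ⟨n, hpS, fun z hz => hball (((hSP n p hpS).2 z hz x hxp).trans hn)⟩,
        hxp⟩
    · obtain ⟨n, -, hpU⟩ := mem_iUnion.1 hp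
      exact hpU
  rw [hU_eq]
  refine isGδ_compl_sUnion_of_isLocallyClosed
    (countable_iUnion fun n => (hSc n).mono (sep_subset _ _)) fun p hp => ?_
  obtain ⟨n, hpS, -⟩ := mem_iUnion.1 hp
  exact (hSP n p hpS).1

end FragmentedMetric

section BaireOne

variable {X Y : Type*} [TopologicalSpace X] [PseudoMetricSpace Y] [SeparableSpace Y] {f : X → Y}

theorem countablyCoveredBy_univ_of_isGδ_compl_preimage
    (hf : ∀ U : Set Y, IsOpen U → IsGδ (f ⁻¹' U)ᶜ) {ε : ℝ} (hε : 0 < ε) :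
    CountablyCoveredBy (fun p => IsClosed p ∧ ∀ x ∈ p, ∀ y ∈ p, dist (f x) (f y) < ε) univ := by
  obtain ⟨D, hDc, hD⟩ := exists_countable_dense Y
  choose g hg hfg using fun y : Y =>
    isGδ_compl_iff_eq_iUnion_nat.1 (hf (Metric.ball y (ε / 2)) Metric.isOpen_ball)
  refine ⟨⋃ y ∈ D, range (g y), hDc.biUnion fun y _ => countable_range (g y), ?_, ?_⟩
  · simp only [mem_iUnion, mem_range]
    rintro p ⟨y, -, n, rfl⟩
    refine ⟨hg y n, fun x hx x' hx' => ?_⟩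
    have hball : ∀ z ∈ g y n, dist (f z) y < ε / 2 := fun z hz => by
      rw [← Metric.mem_ball, ← mem_preimage, hfg y]
      exact mem_iUnion_of_mem n hz
    calc dist (f x) (f x') ≤ dist (f x) y + dist (f x') y := dist_triangle_right _ _ _
      _ < ε / 2 + ε / 2 := add_lt_add (hball x hx) (hball x' hx')
      _ = ε := add_halves ε
  · intro x _
    obtain ⟨y, hyD, hy⟩ := hD.exists_dist_lt (f x) (half_pos hε)
    have hx : x ∈ f ⁻¹' Metric.ball y (ε / 2) := hy
    rw [hfg y] at hx
    obtain ⟨n, hn⟩ := mem_iUnion.1 hx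
    exact ⟨g y n, mem_biUnion hyD (mem_range_self n), hn⟩

theorem FragmentedMetric.of_isGδ_compl_preimage [IsCompletelyPseudoMetrizableSpace X]
    (hf : ∀ U : Set Y, IsOpen U → IsGδ (f ⁻¹' U)ᶜ) : FragmentedMetric f := by
  intro A hA ε hε
  obtain ⟨S, hSc, hSP, hS⟩ := countablyCoveredBy_univ_of_isGδ_compl_preimage hf hε
  have := (isClosed_closure (s := A)).isCompletelyPseudoMetrizableSpace
  obtain ⟨p, hpS, O, hO, hOA, hOp⟩ := exists_mem_isOpen_inter_subset_of_subset_sUnion hA.closure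
    hSc (fun p hp => (hSP p hp).1) ((subset_univ _).trans hS)
  refine ⟨O, hO, ?_, fun x hx x' hx' => ?_⟩
  · rw [inter_comm] at hOA ⊢
    exact (closure_inter_open_nonempty_iff hO).1 hOA
  · exact (hSP p hpS).2 x (hOp ⟨hx.1, subset_closure hx.2⟩) x' (hOp ⟨hx'.1, subset_closure hx'.2⟩)

end BaireOne

/-- For a Polish space `X` and a separable metric space `Y`, `f : X → Y` is fragmented
iff `f` is of Baire class 1 (preimages of open sets are `F_σ`). -/
theorem fragmented_iff_baire_class_one {X Y : Type*} [TopologicalSpace X] [PolishSpace X]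
    [MetricSpace Y] [TopologicalSpace.SeparableSpace Y] (f : X → Y) :
    FragmentedMetric f ↔
      ∀ U : Set Y, IsOpen U → ∃ g : ℕ → Set X, (∀ n, IsClosed (g n)) ∧ f ⁻¹' U = ⋃ n, g n := by
  simp_rw [← isGδ_compl_iff_eq_iUnion_nat]
  exact ⟨fun hf _ hU => hf.isGδ_compl_preimage hU, FragmentedMetric.of_isGδ_compl_preimage⟩
end

section
/- Let X be a compact Hausdorff space and F ⊆ C(X) a norm bounded subset. If every sequence in F has a pointwise convergent subsequence (in ℝ^X), then F contains no independent sequence (i.e., F is tame). -/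
/-!
Along a pointwise convergent subsequence the independent sequence stays independent, so the
closed sets `{x | g (2k) x ≤ a ∧ b ≤ g (2k+1) x}` have the finite intersection property.
By compactness some point lies in all of them, and there the subsequence oscillates between
`≤ a` and `≥ b`, so it cannot converge.
-/

open Filter Topology

namespace IndepSeq

variable {X : Type*} {f : ℕ → X → ℝ}

theorem comp_injective (hf : IndepSeq f) {φ : ℕ → ℕ} (hφ : φ.Injective) :
    IndepSeq (f ∘ φ) := by
  obtain ⟨a, b, hab, hind⟩ := hf
  refine ⟨a, b, hab, fun P M hPM => ?_⟩
  obtain ⟨x, hxP, hxM⟩ := hind (P.map ⟨φ, hφ⟩) (M.map ⟨φ, hφ⟩) (Finset.disjoint_map _ |>.2 hPM)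
  exact ⟨x, fun n hn => hxP _ (Finset.mem_map_of_mem _ hn),
    fun n hn => hxM _ (Finset.mem_map_of_mem _ hn)⟩

theorem exists_alternating [TopologicalSpace X] [CompactSpace X] (hf : IndepSeq f)
    (hcont : ∀ n, Continuous (f n)) :
    ∃ a b : ℝ, a < b ∧ ∃ x : X, ∀ k, f (2 * k) x ≤ a ∧ b ≤ f (2 * k + 1) x := by
  obtain ⟨a, b, hab, hind⟩ := hf
  let t : ℕ → Set X := fun k => {x | f (2 * k) x ≤ a ∧ b ≤ f (2 * k + 1) x}
  have ht_closed : ∀ k, IsClosed (t k) := fun k =>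
    (isClosed_le (hcont _) continuous_const).inter (isClosed_le continuous_const (hcont _))
  have ht_finite : ∀ u : Finset ℕ, (Set.univ ∩ ⋂ k ∈ u, t k).Nonempty := by
    intro u
    have hdisj : Disjoint (u.image (2 * ·)) (u.image (2 * · + 1)) := by
      simp only [Finset.disjoint_left, Finset.mem_image]
      omega
    obtain ⟨x, hxP, hxM⟩ := hind _ _ hdisj
    refine ⟨x, Set.mem_univ x, Set.mem_iInter₂.2 fun k hk => ⟨?_, ?_⟩⟩
    · exact (hxP _ (Finset.mem_image_of_mem _ hk)).le
    · exact (hxM _ (Finset.mem_image_of_mem _ hk)).le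
  obtain ⟨x, -, hx⟩ := isCompact_univ.inter_iInter_nonempty t ht_closed ht_finite
  exact ⟨a, b, hab, x, Set.mem_iInter.1 hx⟩

end IndepSeq

theorem not_tendsto_of_alternating {α : Type*} [LinearOrder α] [TopologicalSpace α]
    [OrderClosedTopology α] {u : ℕ → α} {a b l : α} (hab : a < b)
    (hu : ∀ k, u (2 * k) ≤ a ∧ b ≤ u (2 * k + 1)) : ¬ Tendsto u atTop (𝓝 l) := by
  intro hl
  have h_even : l ≤ a :=
    le_of_tendsto (hl.comp (strictMono_mul_left_of_pos two_pos).tendsto_atTop)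
      (Eventually.of_forall fun k => (hu k).1)
  have h_odd : b ≤ l :=
    ge_of_tendsto (hl.comp (strictMono_id.const_mul two_pos |>.add_const 1).tendsto_atTop)
      (Eventually.of_forall fun k => (hu k).2)
  exact (h_even.trans_lt hab).not_ge h_odd

theorem tame_of_pointwise_sequentially_compact_general {X : Type*} [TopologicalSpace X]
    [CompactSpace X] (F : Set C(X, ℝ))
    (hseq : ∀ g : ℕ → C(X, ℝ), (∀ n, g n ∈ F) →
      ∃ φ : ℕ → ℕ, StrictMono φ ∧ ∃ h : X → ℝ,
        ∀ x, Filter.Tendsto (fun k => g (φ k) x) Filter.atTop (nhds (h x))) :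
    ¬ ∃ g : ℕ → C(X, ℝ), (∀ n, g n ∈ F) ∧ IndepSeq (fun n => (g n : X → ℝ)) := by
  rintro ⟨g, hgF, hind⟩
  obtain ⟨φ, hφ, h, hconv⟩ := hseq g hgF
  obtain ⟨a, b, hab, x, hx⟩ :=
    (hind.comp_injective hφ.injective).exists_alternating fun n => (g (φ n)).continuous
  exact not_tendsto_of_alternating hab hx (hconv x)

/-- Let `X` be compact Hausdorff and `F ⊆ C(X)` norm bounded. If every sequence in `F`
has a pointwise convergent subsequence, then `F` contains no independent sequence. -/
theorem tame_of_pointwise_sequentially_compact {X : Type*} [TopologicalSpace X]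
    [CompactSpace X] [T2Space X] (F : Set C(X, ℝ))
    (hb : ∃ C : ℝ, ∀ f ∈ F, ‖f‖ ≤ C)
    (hseq : ∀ g : ℕ → C(X, ℝ), (∀ n, g n ∈ F) →
      ∃ φ : ℕ → ℕ, StrictMono φ ∧ ∃ h : X → ℝ,
        ∀ x, Filter.Tendsto (fun k => g (φ k) x) Filter.atTop (nhds (h x))) :
    ¬ ∃ g : ℕ → C(X, ℝ), (∀ n, g n ∈ F) ∧ IndepSeq (fun n => (g n : X → ℝ)) :=
  tame_of_pointwise_sequentially_compact_general F hseq
end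

section
/- Let V be a Banach space, F ⊆ V a bounded tame subset. Then the closure of F in the weak topology of V is also a tame subset of V. -/
/-- A bounded subset `F` of a Banach space `V` is *tame* if `F`, viewed as a family of
functions on the unit ball of the dual `V*`, contains no independent sequence. -/
def TameSubset {V : Type*} [NormedAddCommGroup V] [NormedSpace ℝ V] (F : Set V) : Prop :=
  ¬ ∃ g : ℕ → V, (∀ n, g n ∈ F) ∧
    IndepSeq (fun n (ψ : {ψ : V →L[ℝ] ℝ // ‖ψ‖ ≤ 1}) => ψ.1 (g n))

/-!
On the weak* compact unit ball `K` of the dual, elements of `V` are continuous functions and weak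
closure becomes pointwise closure, so it suffices to treat continuous functions on a compact space.
If `g` is independent with constants `a < b`, every pattern `σ : ℕ → Bool` is realized in `K` by
the closed set where `g n ≤ a` or `b ≤ g n` according to `σ n`, and by Zorn some minimal closed
`T ⊆ K` realizes all patterns. Minimality makes `T` hereditary: if an open `U` meets `T`, then
`T \ U` misses some pattern, by compactness already on finitely many indices, so for all but
finitely many `s` both sides of `g s` are realized in `U ∩ T`. Now choose `f 0, f 1, … ∈ F` one at a
time, keeping all `2 ^ k` strict patterns of `f 0, …, f (k - 1)` with thresholds `a + ε < b - ε`
realized in `T`: pick one `s` that works for all of them, and approximate `g s` within `ε` at the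
finitely many witnesses by an element of `F`.
-/

open Set Filter Function

section Patterns

variable {X : Type*}

def RealizesAllPatterns (S : ℕ → Bool → Set X) (C : Set X) : Prop :=
  ∀ σ : ℕ → Bool, (C ∩ ⋂ i, S i (σ i)).Nonempty

variable [TopologicalSpace X] [CompactSpace X] {S : ℕ → Bool → Set X}

theorem IsChain.realizesAllPatterns_sInter (hS : ∀ i ι, IsClosed (S i ι))
    {c : Set (Set X)} (hchain : IsChain (· ⊆ ·) c) (hne : c.Nonempty)
    (hc : ∀ C ∈ c, IsClosed C ∧ RealizesAllPatterns S C) :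
    RealizesAllPatterns S (⋂₀ c) := by
  intro σ
  have : Nonempty ((· ∩ ⋂ i, S i (σ i)) '' c) := (hne.image _).to_subtype
  have hclosed : ∀ C ∈ c, IsClosed (C ∩ ⋂ i, S i (σ i)) := fun C hC =>
    (hc C hC).1.inter (isClosed_iInter fun i => hS i (σ i))
  have hdir : DirectedOn (· ⊇ ·) ((· ∩ ⋂ i, S i (σ i)) '' c) := by
    rintro _ ⟨C, hC, rfl⟩ _ ⟨D, hD, rfl⟩
    rcases hchain.total hC hD with h | h
    · exact ⟨_, mem_image_of_mem _ hC, subset_rfl, inter_subset_inter_left _ h⟩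
    · exact ⟨_, mem_image_of_mem _ hD, inter_subset_inter_left _ h, subset_rfl⟩
  obtain ⟨x, hx⟩ := IsCompact.nonempty_sInter_of_directed_nonempty_isCompact_isClosed hdir
      (forall_mem_image.2 fun C hC => (hc C hC).2 σ)
      (forall_mem_image.2 fun C hC => (hclosed C hC).isCompact)
      (forall_mem_image.2 hclosed)
  rw [sInter_image, biInter_inter hne, ← sInter_eq_biInter] at hx
  exact ⟨x, hx⟩

theorem exists_minimal_isClosed_realizesAllPatterns (hS : ∀ i ι, IsClosed (S i ι))
    (huniv : RealizesAllPatterns S univ) :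
    ∃ T, Minimal (fun C => IsClosed C ∧ RealizesAllPatterns S C) T := by
  obtain ⟨T, -, hT⟩ := zorn_superset_nonempty {C | IsClosed C ∧ RealizesAllPatterns S C}
    (fun c hc hchain hne => ⟨⋂₀ c, ⟨isClosed_sInter fun C hC => (hc hC).1,
      hchain.realizesAllPatterns_sInter hS hne hc⟩, fun _ => sInter_subset_of_mem⟩)
    univ ⟨isClosed_univ, huniv⟩
  exact ⟨T, hT⟩

theorem Minimal.eventually_inter_inter_nonempty {T : Set X}
    (hT : Minimal (fun C => IsClosed C ∧ RealizesAllPatterns S C) T)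
    (hS : ∀ i ι, IsClosed (S i ι)) {U : Set X} (hU : IsOpen U) (hUT : (U ∩ T).Nonempty) :
    ∀ᶠ s in cofinite, ∀ ι, (U ∩ T ∩ S s ι).Nonempty := by
  obtain ⟨σ, hσ⟩ : ∃ σ : ℕ → Bool, T \ U ∩ ⋂ i, S i (σ i) = ∅ := by
    by_contra! h
    have hTU := hT.eq_of_subset ⟨hT.prop.1.sdiff hU, h⟩ sdiff_subset
    obtain ⟨x, hxU, hxT⟩ := hUT
    exact (hTU ▸ hxT).2 hxU
  obtain ⟨t, ht⟩ := (hT.prop.1.sdiff hU).isCompact.elim_finite_subfamily_closed _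
    (fun i => hS i (σ i)) hσ
  filter_upwards [t.eventually_cofinite_notMem] with s hs ι
  obtain ⟨x, hxT, hx⟩ := hT.prop.2 (update σ s ι)
  have hxS := mem_iInter.1 hx
  refine ⟨x, ⟨?_, hxT⟩, by simpa using hxS s⟩
  by_contra hxU
  have hx' : x ∈ T \ U ∩ ⋂ i ∈ t, S i (σ i) := ⟨⟨hxT, hxU⟩, mem_iInter₂.2 fun i hi => by
    simpa [update_of_ne (ne_of_mem_of_not_mem hi hs)] using hxS i⟩
  rwa [ht] at hx'

end Patterns

theorem exists_mem_forall_abs_sub_lt_of_mem_closure {Y : Type*} {𝓕 : Set (Y → ℝ)} {g : Y → ℝ}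
    (hg : g ∈ closure 𝓕) {ι : Type*} [Finite ι] (y : ι → Y) {ε : ℝ} (hε : 0 < ε) :
    ∃ f ∈ 𝓕, ∀ i, |f (y i) - g (y i)| < ε := by
  obtain ⟨f, hf, hf𝓕⟩ := mem_closure_iff.1 hg (⋂ i, {f | |f (y i) - g (y i)| < ε})
    (isOpen_iInter_of_finite fun i =>
      isOpen_lt ((continuous_apply _).sub continuous_const).abs continuous_const)
    (mem_iInter.2 fun i => by simpa using hε)
  exact ⟨f, hf𝓕, fun i => mem_iInter.1 hf i⟩

theorem exists_seq_forall_of_exists_update {α : Type*} {Q : ℕ → (ℕ → α) → Prop}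
    (hQ : ∀ k f f', (∀ i < k, f i = f' i) → Q k f → Q k f') (h0 : ∃ f, Q 0 f)
    (hstep : ∀ k f, Q k f → ∃ v, Q (k + 1) (update f k v)) : ∃ f, ∀ k, Q k f := by
  obtain ⟨f₀, hf₀⟩ := h0
  have : Nonempty α := ⟨f₀ 0⟩
  choose! v hv using hstep
  let G : ℕ → ℕ → α := fun k => Nat.rec f₀ (fun k f => update f k (v k f)) k
  have hG : ∀ k, Q k (G k) := fun k => by
    induction k with
    | zero => exact hf₀
    | succ k ih => exact hv k _ ih
  have hG_stable : ∀ k, ∀ i < k, G k i = G (i + 1) i := fun k => by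
    induction k with
    | zero => simp
    | succ k ih =>
      intro i hi
      rcases Nat.lt_succ_iff_lt_or_eq.1 hi with hi | rfl
      · exact (update_of_ne hi.ne _ _).trans (ih i hi)
      · rfl
  exact ⟨fun i => G (i + 1) i, fun k => hQ k _ _ (hG_stable k) (hG k)⟩

section Functions

variable {X : Type*}

def closedSide (g : ℕ → X → ℝ) (a b : ℝ) (i : ℕ) (ι : Bool) : Set X :=
  {x | if ι then b ≤ g i x else g i x ≤ a}

def openPattern (f : ℕ → X → ℝ) (A B : ℝ) (k : ℕ) (τ : Fin k → Bool) : Set X :=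
  {x | ∀ i : Fin k, if τ i then B < f i x else f i x < A}

variable {g f f' : ℕ → X → ℝ} {a b A B : ℝ} {k : ℕ}

theorem openPattern_congr (h : ∀ i < k, f i = f' i) (τ : Fin k → Bool) :
    openPattern f A B k τ = openPattern f' A B k τ := by
  ext x
  exact forall_congr' fun i => by rw [h i i.2]

theorem openPattern_zero (τ : Fin 0 → Bool) : openPattern f A B 0 τ = univ := by
  simp [openPattern]

theorem mem_openPattern_succ_update {v : X → ℝ} {τ : Fin (k + 1) → Bool} {x : X} :
    x ∈ openPattern (update f k v) A B (k + 1) τ ↔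
      x ∈ openPattern f A B k (Fin.init τ) ∧
        if τ (Fin.last k) then B < v x else v x < A := by
  simp only [openPattern, mem_ofPred_eq, Fin.forall_fin_succ', Fin.val_last, update_self]
  refine and_congr_left' (forall_congr' fun i => ?_)
  rw [Fin.val_castSucc, update_of_ne i.is_lt.ne, Fin.init]

variable [TopologicalSpace X]

theorem isClosed_closedSide {i : ℕ} (hg : Continuous (g i)) (ι : Bool) :
    IsClosed (closedSide g a b i ι) := by
  cases ι
  · exact isClosed_le hg continuous_const
  · exact isClosed_le continuous_const hg

theorem isOpen_openPattern (hf : ∀ i < k, Continuous (f i)) (τ : Fin k → Bool) :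
    IsOpen (openPattern f A B k τ) := by
  simp only [openPattern, ofPred_forall]
  refine isOpen_iInter_of_finite fun i => ?_
  split_ifs
  · exact isOpen_lt continuous_const (hf i i.2)
  · exact isOpen_lt (hf i i.2) continuous_const

variable [CompactSpace X] {𝓕 : Set (X → ℝ)}

theorem realizesAllPatterns_closedSide_univ (hg : ∀ n, Continuous (g n))
    (hind : ∀ P M : Finset ℕ, Disjoint P M →
      ∃ x, (∀ n ∈ P, g n x < a) ∧ ∀ n ∈ M, b < g n x) :
    RealizesAllPatterns (closedSide g a b) univ := by
  intro σ
  refine isCompact_univ.inter_iInter_nonempty _ (fun i => isClosed_closedSide (hg i) _)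
    fun u => ?_
  obtain ⟨x, hP, hM⟩ := hind _ _ (Finset.disjoint_filter_filter_not u u (σ · = true)).symm
  refine ⟨x, trivial, mem_iInter₂.2 fun i hi => ?_⟩
  cases h : σ i
  · simpa [closedSide, h] using (hP i (Finset.mem_filter.2 ⟨hi, by simp [h]⟩)).le
  · simpa [closedSide, h] using (hM i (Finset.mem_filter.2 ⟨hi, h⟩)).le

theorem exists_mem_forall_openPattern_update_inter_nonempty (hg : ∀ n, Continuous (g n))
    (hg𝓕 : ∀ n, g n ∈ closure 𝓕) {T : Set X}
    (hT : Minimal (fun C => IsClosed C ∧ RealizesAllPatterns (closedSide g a b) C) T)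
    {ε : ℝ} (hε : 0 < ε) (hf : ∀ i < k, Continuous (f i))
    (hfT : ∀ τ, (openPattern f (a + ε) (b - ε) k τ ∩ T).Nonempty) :
    ∃ v ∈ 𝓕, ∀ τ, (openPattern (update f k v) (a + ε) (b - ε) (k + 1) τ ∩ T).Nonempty := by
  obtain ⟨s, hs⟩ := (eventually_all.2 fun τ => hT.eventually_inter_inter_nonempty
    (fun i => isClosed_closedSide (hg i)) (isOpen_openPattern hf τ) (hfT τ)).exists
  choose x hx using hs
  obtain ⟨v, hv𝓕, hv⟩ := exists_mem_forall_abs_sub_lt_of_mem_closure (hg𝓕 s) (uncurry x) hε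
  refine ⟨v, hv𝓕, fun τ => ⟨x (Fin.init τ) (τ (Fin.last k)),
    mem_openPattern_succ_update.2 ⟨(hx _ _).1.1, ?_⟩, (hx _ _).1.2⟩⟩
  obtain ⟨hv₁, hv₂⟩ := abs_lt.1 (hv (Fin.init τ, τ (Fin.last k)))
  have hside := (hx (Fin.init τ) (τ (Fin.last k))).2
  generalize τ (Fin.last k) = ι at hv₁ hv₂ hside ⊢
  cases ι <;> simp only [closedSide, uncurry_apply_pair, mem_ofPred_eq, Bool.false_eq_true,
    ↓reduceIte] at hv₁ hv₂ hside ⊢ <;> linarith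

theorem IndepSeq.exists_forall_mem_of_forall_mem_closure (h𝓕 : ∀ f ∈ 𝓕, Continuous f)
    (hg : ∀ n, Continuous (g n)) (hg𝓕 : ∀ n, g n ∈ closure 𝓕) (hind : IndepSeq g) :
    ∃ f : ℕ → X → ℝ, (∀ n, f n ∈ 𝓕) ∧ IndepSeq f := by
  obtain ⟨a, b, hab, hind⟩ := hind
  obtain ⟨T, hT⟩ := exists_minimal_isClosed_realizesAllPatterns
    (fun i => isClosed_closedSide (hg i)) (realizesAllPatterns_closedSide_univ hg hind)
  obtain ⟨ε, hε, hεab⟩ : ∃ ε, 0 < ε ∧ a + ε < b - ε := ⟨(b - a) / 3, by linarith, by linarith⟩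
  have hT_ne : T.Nonempty := (hT.prop.2 fun _ => false).mono inter_subset_left
  let Q : ℕ → (ℕ → X → ℝ) → Prop := fun k f =>
    (∀ i < k, f i ∈ 𝓕) ∧ ∀ τ, (openPattern f (a + ε) (b - ε) k τ ∩ T).Nonempty
  obtain ⟨f, hf⟩ : ∃ f, ∀ k, Q k f := by
    refine exists_seq_forall_of_exists_update ?_ ⟨g, by simpa [Q, openPattern_zero] using hT_ne⟩ ?_
    · rintro k f f' hff' ⟨hf𝓕, hfT⟩
      exact ⟨fun i hi => hff' i hi ▸ hf𝓕 i hi, fun τ => openPattern_congr hff' τ ▸ hfT τ⟩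
    · rintro k f ⟨hf𝓕, hfT⟩
      obtain ⟨v, hv𝓕, hvT⟩ := exists_mem_forall_openPattern_update_inter_nonempty hg hg𝓕 hT
        hε (fun i hi => h𝓕 _ (hf𝓕 i hi)) hfT
      refine ⟨v, fun i hi => ?_, hvT⟩
      rcases Nat.lt_succ_iff_lt_or_eq.1 hi with hi | rfl
      · simpa [update_of_ne hi.ne] using hf𝓕 i hi
      · simpa using hv𝓕
  refine ⟨f, fun n => (hf (n + 1)).1 n n.lt_succ_self, a + ε, b - ε, hεab,
    fun P M hPM => ?_⟩
  obtain ⟨k, hk⟩ := (P ∪ M).exists_nat_subset_range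
  have hlt : ∀ n ∈ P ∪ M, n < k := fun n hn => Finset.mem_range.1 (hk hn)
  obtain ⟨x, hx, -⟩ := (hf k).2 fun i => decide (i.1 ∈ M)
  refine ⟨x, fun n hn => ?_, fun n hn => ?_⟩
  · simpa [Finset.disjoint_left.1 hPM hn] using hx ⟨n, hlt n (Finset.mem_union_left _ hn)⟩
  · simpa [hn] using hx ⟨n, hlt n (Finset.mem_union_right _ hn)⟩

end Functions

theorem indepSeq_comp_iff_of_surjective {Y Z : Type*} {φ : Y → Z} (hφ : Surjective φ)
    {f : ℕ → Z → ℝ} : IndepSeq (fun n y => f n (φ y)) ↔ IndepSeq f := by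
  simp only [IndepSeq, hφ.exists]

section WeakDualBall

open Metric

variable {V : Type*} [NormedAddCommGroup V] [NormedSpace ℝ V]

instance : CompactSpace (WeakDual.toStrongDual ⁻¹' closedBall (0 : StrongDual ℝ V) 1) :=
  isCompact_iff_compactSpace.1 (WeakDual.isCompact_closedBall 0 1)

local notation "K" => WeakDual.toStrongDual ⁻¹' closedBall (0 : StrongDual ℝ V) 1

theorem continuous_eval_weakDualBall (v : V) : Continuous fun ψ : K => ψ.1 v :=
  (WeakDual.eval_continuous v).comp continuous_subtype_val

theorem indepSeq_unitBall_iff_weakDual (g : ℕ → V) :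
    IndepSeq (fun n (ψ : {ψ : V →L[ℝ] ℝ // ‖ψ‖ ≤ 1}) => ψ.1 (g n)) ↔
      IndepSeq (fun n (ψ : K) => ψ.1 (g n)) :=
  indepSeq_comp_iff_of_surjective (f := fun n (ψ : K) => ψ.1 (g n))
    (φ := fun ψ : {ψ : V →L[ℝ] ℝ // ‖ψ‖ ≤ 1} =>
      (⟨StrongDual.toWeakDual ψ.1, by simpa using ψ.2⟩ : K))
    fun ψ => ⟨⟨ψ.1.toStrongDual, by simpa using ψ.2.out⟩, rfl⟩

theorem mem_closure_image_eval_weakDual {F : Set V} {v : V}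
    (hv : toWeakSpace ℝ V v ∈ closure (toWeakSpace ℝ V '' F)) :
    (fun ψ : K => ψ.1 v) ∈ closure ((fun w (ψ : K) => ψ.1 w) '' F) := by
  have hcont : Continuous fun (w : WeakSpace ℝ V) (ψ : K) => (topDualPairing ℝ V).flip w ψ.1 :=
    continuous_pi fun ψ => WeakBilin.eval_continuous _ _
  have := image_closure_subset_closure_image hcont ⟨_, hv, rfl⟩
  rw [image_image] at this
  exact this

end WeakDualBall

theorem tame_weak_closure_general {V : Type*} [NormedAddCommGroup V] [NormedSpace ℝ V]
    (F : Set V) (hF : TameSubset F) :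
    TameSubset {v : V | toWeakSpace ℝ V v ∈ closure (toWeakSpace ℝ V '' F)} := by
  rintro ⟨g, hg, hind⟩
  obtain ⟨f, hf, hf_ind⟩ :=
    ((indepSeq_unitBall_iff_weakDual g).1 hind).exists_forall_mem_of_forall_mem_closure
      (forall_mem_image.2 fun v _ => continuous_eval_weakDualBall v)
      (fun n => continuous_eval_weakDualBall (g n))
      (fun n => mem_closure_image_eval_weakDual (hg n))
  choose v hvF hv using hf
  obtain rfl : f = fun n ψ => ψ.1 (v n) := funext fun n => (hv n).symm
  exact hF ⟨v, hvF, (indepSeq_unitBall_iff_weakDual v).2 hf_ind⟩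

/-- The closure of a bounded tame subset of a Banach space in the weak topology is tame. -/
theorem tame_weak_closure {V : Type*} [NormedAddCommGroup V] [NormedSpace ℝ V]
    [CompleteSpace V] (F : Set V) (hb : ∃ C : ℝ, ∀ v ∈ F, ‖v‖ ≤ C) (hF : TameSubset F) :
    TameSubset {v : V | toWeakSpace ℝ V v ∈ closure (toWeakSpace ℝ V '' F)} :=
  tame_weak_closure_general F hF
end
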